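/- Fix dead time τ > 0 and define, for Λ0 ≥ 0, c(Λ0) = h_b(u/(1+u)) − (ln u)/(1+u) with u = u(Λ0) = exp(e^{Λ0·τ}·h_b(p(Λ0))), where p(x) = 1 − exp(−x·τ) and h_b is the binary entropy (with the convention c(0) = 1). Then c is strictly decreasing on [0,∞), c(Λ0) ∈ (0,1] for all Λ0 ≥ 0 with c(Λ0) = 1 if and only if Λ0 = 0, and lim_{Λ0→∞} c(Λ0) = 0. -/

import Mathlib

/-- p(x) = 1 − exp(−x·τ), the detection probability over a dead time τ. -/
noncomputable def pdet (τ x : ℝ) : ℝ := 1 - Real.exp (-(x * τ))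

/-- Binary entropy h_b(x) = −x·ln x − (1−x)·ln(1−x) (with 0·ln 0 = 0). -/
noncomputable def hb (x : ℝ) : ℝ := -(x * Real.log x) - (1 - x) * Real.log (1 - x)

/-- The asymptotic capacity coefficient c(Λ0) = h_b(u/(1+u)) − (ln u)/(1+u) with
u = exp(e^{Λ0·τ}·h_b(p(Λ0))), under the convention c(0) = 1. -/
noncomputable def cCoef (τ Λ0 : ℝ) : ℝ :=
  if Λ0 = 0 then 1
  else
    hb (Real.exp (Real.exp (Λ0 * τ) * hb (pdet τ Λ0)) /
          (1 + Real.exp (Real.exp (Λ0 * τ) * hb (pdet τ Λ0)))) -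
      Real.log (Real.exp (Real.exp (Λ0 * τ) * hb (pdet τ Λ0))) /
        (1 + Real.exp (Real.exp (Λ0 * τ) * hb (pdet τ Λ0)))

/-- Auxiliary: the exponent V(Λ) = e^{Λτ}·h_b(p(Λ)). -/
noncomputable def Vfun (τ Λ : ℝ) : ℝ := Real.exp (Λ * τ) * hb (pdet τ Λ)

lemma one_sub_pdet (τ Λ : ℝ) : 1 - pdet τ Λ = Real.exp (-(Λ * τ)) := by
  simp [pdet]

lemma pdet_pos {τ Λ : ℝ} (hτ : 0 < τ) (hΛ : 0 < Λ) : 0 < pdet τ Λ := by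
  have : Real.exp (-(Λ * τ)) < 1 := by
    rw [Real.exp_lt_one_iff]; nlinarith
  simpa [pdet] using this

lemma pdet_lt_one (τ Λ : ℝ) : pdet τ Λ < 1 := by
  have := Real.exp_pos (-(Λ * τ)); simp [pdet]; linarith

lemma hb_pos {p : ℝ} (h0 : 0 < p) (h1 : p < 1) : 0 < hb p := by
  have l1 : Real.log p < 0 := Real.log_neg h0 h1
  have l2 : Real.log (1 - p) < 0 := Real.log_neg (by linarith) (by linarith)
  have : (1 - p) * Real.log (1 - p) < 0 := mul_neg_of_pos_of_neg (by linarith) l2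
  have : p * Real.log p < 0 := mul_neg_of_pos_of_neg h0 l1
  unfold hb; nlinarith

lemma Vfun_pos {τ Λ : ℝ} (hτ : 0 < τ) (hΛ : 0 < Λ) : 0 < Vfun τ Λ :=
  mul_pos (Real.exp_pos _) (hb_pos (pdet_pos hτ hΛ) (pdet_lt_one τ Λ))

lemma cCoef_eq {τ Λ : ℝ} (hΛ : Λ ≠ 0) :
    cCoef τ Λ = Real.log (1 + Real.exp (-(Vfun τ Λ))) := by
  rw [cCoef, if_neg hΛ]
  set v := Real.exp (Λ * τ) * hb (pdet τ Λ) with hv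
  have hVv : Vfun τ Λ = v := rfl
  rw [hVv]
  set u := Real.exp v with hu
  have hu0 : 0 < u := Real.exp_pos v
  have h1u : 0 < 1 + u := by linarith
  have hfrac : (1 : ℝ) - u / (1 + u) = 1 / (1 + u) := by field_simp; ring
  have hlu : Real.log u = v := Real.log_exp v
  have hld : Real.log (u / (1 + u)) = v - Real.log (1 + u) := by
    rw [Real.log_div hu0.ne' h1u.ne', hlu]
  have hld2 : Real.log (1 / (1 + u)) = -Real.log (1 + u) := by
    rw [Real.log_div one_ne_zero h1u.ne', Real.log_one]; ring
  have hrhs : Real.log (1 + Real.exp (-v)) = Real.log (1 + u) - v := by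
    have : (1 : ℝ) + Real.exp (-v) = (1 + u) / u := by
      rw [Real.exp_neg, ← hu]; field_simp; ring
    rw [this, Real.log_div h1u.ne' hu0.ne', hlu]
  rw [hrhs, hb, hfrac, hld, hld2, hlu]
  field_simp
  ring

lemma hasDerivAt_hb {p : ℝ} (h0 : p ≠ 0) (h1 : p ≠ 1) :
    HasDerivAt hb (Real.log (1 - p) - Real.log p) p := by
  have h1' : (1 : ℝ) - p ≠ 0 := by intro h; apply h1; linarith
  have hA : HasDerivAt (fun x : ℝ => x * Real.log x) (Real.log p + 1) p :=
    Real.hasDerivAt_mul_log h0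
  have hsub : HasDerivAt (fun x : ℝ => 1 - x) (-1) p := by
    exact (hasDerivAt_id' p).const_sub 1
  have hB : HasDerivAt (fun x : ℝ => (1 - x) * Real.log (1 - x))
      ((Real.log (1 - p) + 1) * (-1)) p :=
    (Real.hasDerivAt_mul_log h1').comp p hsub
  have := (hA.neg).sub hB
  exact this.congr_deriv (by ring)

lemma hasDerivAt_pdet (τ Λ : ℝ) :
    HasDerivAt (fun x => pdet τ x) (τ * Real.exp (-(Λ * τ))) Λ := by
  have hinner : HasDerivAt (fun x : ℝ => -(x * τ)) (-τ) Λ := by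
    exact ((hasDerivAt_id' Λ).mul_const τ).neg.congr_deriv (by ring)
  have := ((hasDerivAt_const Λ (1:ℝ)).sub hinner.exp)
  exact this.congr_deriv (by ring)

lemma hasDerivAt_Vfun {τ Λ : ℝ} (hτ : 0 < τ) (hΛ : 0 < Λ) :
    HasDerivAt (Vfun τ) (τ * Real.exp (Λ * τ) * (-Real.log (pdet τ Λ))) Λ := by
  set p := pdet τ Λ with hp
  have hp0 : 0 < p := pdet_pos hτ hΛ
  have hp1 : p < 1 := pdet_lt_one τ Λ
  have hq : 1 - p = Real.exp (-(Λ * τ)) := one_sub_pdet τ Λ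
  have hexp : HasDerivAt (fun x : ℝ => Real.exp (x * τ)) (Real.exp (Λ * τ) * τ) Λ := by
    simpa using ((hasDerivAt_id Λ).mul_const τ).exp
  have hcomp : HasDerivAt (fun x => hb (pdet τ x))
      ((Real.log (1 - p) - Real.log p) * (τ * Real.exp (-(Λ * τ)))) Λ :=
    (hasDerivAt_hb hp0.ne' hp1.ne).comp (h := fun x => pdet τ x) Λ (hasDerivAt_pdet τ Λ)
  have hmul := hexp.mul hcomp
  have : HasDerivAt (Vfun τ)
      (Real.exp (Λ * τ) * τ * hb p +
        Real.exp (Λ * τ) * ((Real.log (1 - p) - Real.log p) * (τ * Real.exp (-(Λ * τ))))) Λ := by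
    exact hmul
  convert this using 1
  have hlq : Real.log (Real.exp (-(Λ * τ))) = -(Λ * τ) := Real.log_exp _
  have hbp : hb p = -(p * Real.log p) - (1 - p) * Real.log (1 - p) := rfl
  have hpq : p = 1 - Real.exp (-(Λ * τ)) := by rw [hp]; rfl
  rw [hbp, hq, hlq, hpq]
  ring

lemma continuous_hb : Continuous hb := by
  have h1 : Continuous fun x : ℝ => x * Real.log x := Real.continuous_mul_log
  have h2 : Continuous fun x : ℝ => (1 - x) * Real.log (1 - x) :=
    h1.comp (continuous_const.sub continuous_id)
  exact (h1.neg).sub h2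

lemma continuous_Vfun (τ : ℝ) : Continuous (Vfun τ) := by
  unfold Vfun
  have hp : Continuous fun x => pdet τ x := by
    unfold pdet
    exact continuous_const.sub (Real.continuous_exp.comp
      (continuous_id.mul continuous_const).neg)
  exact (Real.continuous_exp.comp (continuous_id.mul continuous_const)).mul
    (continuous_hb.comp hp)

lemma strictMonoOn_Vfun {τ : ℝ} (hτ : 0 < τ) : StrictMonoOn (Vfun τ) (Set.Ici 0) := by
  apply strictMonoOn_of_deriv_pos (convex_Ici 0) (continuous_Vfun τ).continuousOn
  intro x hx
  rw [interior_Ici] at hx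
  have hx0 : 0 < x := hx
  rw [(hasDerivAt_Vfun hτ hx0).deriv]
  have hlp : Real.log (pdet τ x) < 0 :=
    Real.log_neg (pdet_pos hτ hx0) (pdet_lt_one τ x)
  exact mul_pos (mul_pos hτ (Real.exp_pos _)) (neg_pos.mpr hlp)

lemma Vfun_ge {τ Λ : ℝ} (hτ : 0 < τ) (hΛ : 0 ≤ Λ) : Λ * τ ≤ Vfun τ Λ := by
  set q := Real.exp (-(Λ * τ)) with hqdef
  have hq0 : 0 < q := Real.exp_pos _
  have hq1 : q ≤ 1 := Real.exp_le_one_iff.mpr (by nlinarith)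
  have hp : pdet τ Λ = 1 - q := rfl
  have hlogq : Real.log q = -(Λ * τ) := Real.log_exp _
  have hplog : (1 - q) * Real.log (1 - q) ≤ 0 := by
    rcases eq_or_lt_of_le hq1 with h | h
    · simp [← h]
    · exact mul_nonpos_of_nonneg_of_nonpos (by linarith)
        (Real.log_nonpos (by linarith) (by linarith))
  have hqe : Real.exp (Λ * τ) * q = 1 := by
    rw [hqdef, ← Real.exp_add]; simp
  have hVb : Vfun τ Λ = Real.exp (Λ * τ) *
      (-((1 - q) * Real.log (1 - q)) - q * Real.log q) := by
    rw [Vfun, hp, hb]; ring_nf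
  rw [hVb, hlogq]
  have hE := Real.exp_pos (Λ * τ)
  have key : Real.exp (Λ * τ) * (-((1 - q) * Real.log (1 - q)) - q * -(Λ * τ))
      = Real.exp (Λ * τ) * (-((1 - q) * Real.log (1 - q)))
        + (Real.exp (Λ * τ) * q) * (Λ * τ) := by ring
  rw [key, hqe]
  have h2 : 0 ≤ Real.exp (Λ * τ) * (-((1 - q) * Real.log (1 - q))) :=
    mul_nonneg hE.le (by linarith)
  linarith

/-- for fixed τ > 0, the coefficient c(Λ0) is strictly decreasing on
[0,∞), takes values in (0,1] with c(Λ0) = 1 iff Λ0 = 0, and tends to 0 as Λ0 → ∞. -/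
theorem cCoef_strictAnti_mem_Ioc_tendsto_zero (τ : ℝ) (hτ : 0 < τ) :
    StrictAntiOn (cCoef τ) (Set.Ici 0) ∧
      (∀ Λ0 : ℝ, 0 ≤ Λ0 →
        cCoef τ Λ0 ∈ Set.Ioc (0:ℝ) 1 ∧ (cCoef τ Λ0 = 1 ↔ Λ0 = 0)) ∧
      Filter.Tendsto (cCoef τ) Filter.atTop (nhds 0) := by
  have hlt1 : ∀ Λ : ℝ, 0 < Λ → cCoef τ Λ < 1 := by
    intro Λ hΛ
    rw [cCoef_eq hΛ.ne']
    have hV : 0 < Vfun τ Λ := Vfun_pos hτ hΛ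
    have h1 : Real.exp (-(Vfun τ Λ)) < 1 := by
      rw [Real.exp_lt_one_iff]; linarith
    have h2 : Real.log (1 + Real.exp (-(Vfun τ Λ))) < Real.log 2 :=
      Real.log_lt_log (by positivity) (by linarith)
    have := Real.log_two_lt_d9
    linarith
  have hpos : ∀ Λ : ℝ, 0 < Λ → 0 < cCoef τ Λ := by
    intro Λ hΛ
    rw [cCoef_eq hΛ.ne']
    have := Real.exp_pos (-(Vfun τ Λ))
    have : (1:ℝ) < 1 + Real.exp (-(Vfun τ Λ)) := by linarith
    simpa using Real.log_pos this
  refine ⟨?_, ?_, ?_⟩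
  · intro a ha b hbmem hab
    simp only [Set.mem_Ici] at ha hbmem
    rcases eq_or_lt_of_le ha with h0 | h0
    · rw [← h0]
      have hc0 : cCoef τ 0 = 1 := by simp [cCoef]
      rw [hc0]
      exact hlt1 b (by linarith)
    · have hb0 : 0 < b := lt_trans h0 hab
      rw [cCoef_eq h0.ne', cCoef_eq hb0.ne']
      have hV : Vfun τ a < Vfun τ b :=
        strictMonoOn_Vfun hτ (le_of_lt h0) (le_of_lt hb0) hab
      apply Real.log_lt_log (by positivity)
      have : Real.exp (-(Vfun τ b)) < Real.exp (-(Vfun τ a)) :=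
        Real.exp_lt_exp.mpr (by linarith)
      linarith
  · intro Λ0 hΛ0
    rcases eq_or_lt_of_le hΛ0 with h0 | h0
    · rw [← h0]
      have hc0 : cCoef τ 0 = 1 := by simp [cCoef]
      rw [hc0]
      exact ⟨⟨one_pos, le_refl 1⟩, by simp⟩
    · refine ⟨⟨hpos Λ0 h0, le_of_lt (hlt1 Λ0 h0)⟩, ?_⟩
      constructor
      · intro h; exact absurd h (ne_of_lt (hlt1 Λ0 h0))
      · intro h; exact absurd h h0.ne'
  · have hub : ∀ᶠ Λ : ℝ in Filter.atTop,
        cCoef τ Λ ≤ Real.log (1 + Real.exp (-(Λ * τ))) := by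
      filter_upwards [Filter.eventually_gt_atTop 0] with Λ hΛ
      rw [cCoef_eq hΛ.ne']
      apply Real.log_le_log (by positivity)
      have h := Vfun_ge hτ hΛ.le
      have : Real.exp (-(Vfun τ Λ)) ≤ Real.exp (-(Λ * τ)) :=
        Real.exp_le_exp.mpr (by linarith)
      linarith
    have hlb : ∀ᶠ Λ : ℝ in Filter.atTop, (0:ℝ) ≤ cCoef τ Λ := by
      filter_upwards [Filter.eventually_gt_atTop 0] with Λ hΛ
      exact (hpos Λ hΛ).le
    have htop : Filter.Tendsto (fun Λ : ℝ => Λ * τ) Filter.atTop Filter.atTop :=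
      Filter.Tendsto.atTop_mul_const hτ Filter.tendsto_id
    have hexp : Filter.Tendsto (fun Λ : ℝ => Real.exp (-(Λ * τ))) Filter.atTop (nhds 0) :=
      Real.tendsto_exp_neg_atTop_nhds_zero.comp htop
    have hadd : Filter.Tendsto (fun Λ : ℝ => 1 + Real.exp (-(Λ * τ)))
        Filter.atTop (nhds 1) := by
      have := (tendsto_const_nhds (x := (1:ℝ)) (f := Filter.atTop)).add hexp
      simpa using this
    have hlog : Filter.Tendsto (fun Λ : ℝ => Real.log (1 + Real.exp (-(Λ * τ))))
        Filter.atTop (nhds 0) := by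
      have hc : Filter.Tendsto Real.log (nhds 1) (nhds 0) := by
        simpa using (Real.continuousAt_log one_ne_zero).tendsto
      exact hc.comp hadd
    exact tendsto_of_tendsto_of_tendsto_of_le_of_le' tendsto_const_nhds hlog hlb hub
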